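/- Let ψ : ℤ × ℤ → ℤ × ℤ be the automorphism ψ(a,b) = (−b, a − b) (an automorphism of order 3). If n, m are positive integers such that ψ maps the subgroup nℤ × mℤ into itself, then n = m, and in that case nℤ × nℤ has index n² in ℤ × ℤ. -/
import Mathlib

/-- Let `ψ : ℤ × ℤ → ℤ × ℤ` be the automorphism `ψ(a,b) = (-b, a - b)`.
If `n, m` are positive integers such that `ψ` maps the subgroup `nℤ × mℤ` into
itself, then `n = m`, and in that case `nℤ × nℤ` has index `n²` in `ℤ × ℤ`. -/
theorem stmt2 (ψ : ℤ × ℤ → ℤ × ℤ) (hψ : ∀ a b : ℤ, ψ (a, b) = (-b, a - b))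
    (n m : ℕ) (hn : 0 < n) (hm : 0 < m)
    (hinv : ∀ p : ℤ × ℤ, (n : ℤ) ∣ p.1 → (m : ℤ) ∣ p.2 →
      (n : ℤ) ∣ (ψ p).1 ∧ (m : ℤ) ∣ (ψ p).2) :
    n = m ∧
    ((AddSubgroup.zmultiples (n : ℤ)).prod (AddSubgroup.zmultiples (n : ℤ))).index = n ^ 2 := by
  have h1 := hinv ((n : ℤ), 0) ⟨1, by ring⟩ ⟨0, by ring⟩
  have h2 := hinv (0, (m : ℤ)) ⟨0, by ring⟩ ⟨1, by ring⟩
  rw [hψ] at h1 h2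
  simp at h1 h2
  have hnm : (n : ℤ) = (m : ℤ) :=
    Int.dvd_antisymm (by positivity) (by positivity) h2 h1
  have : n = m := Nat.cast_injective hnm
  refine ⟨this, ?_⟩
  simp [Int.index_zmultiples]
  simp [sq]
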